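/- arXiv:1804.00101 — 2 statements merged into one kernel-verified Lean document; each statement's English description precedes it below -/
import Mathlib

section
/- Let S be a finite set of n points in ℝ² and let k be an integer with 1 ≤ k ≤ n. Then there exists an optimal k-clustering 𝒞 of S (i.e., a partition of S into at most k nonempty clusters minimizing the sum of the perimeters of the clusters) such that the convex hulls of distinct clusters of 𝒞 are pairwise disjoint. -/
/-!
Among the optimal `k`-clusterings choose one with the fewest clusters. If the hulls of two of
its clusters `C₁`, `C₂` met at a point `x`, then in every direction `θ` the support function of
`C₁ ∪ C₂`, the larger of those of `C₁` and `C₂`, would be at most their sum minus the component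
of `x` in direction `θ`, and that component integrates to zero over the circle. Merging `C₁` and
`C₂` would therefore not increase the cost, while lowering the number of clusters.
-/

noncomputable section

/-- The Euclidean plane. -/
abbrev Plane := EuclideanSpace ℝ (Fin 2)

/-- Perimeter of a bounded set via Cauchy's formula. -/
noncomputable def perim (C : Set Plane) : ℝ :=
  ∫ θ in (0:ℝ)..(2 * Real.pi),
    sSup ((fun p : Plane => p 0 * Real.cos θ + p 1 * Real.sin θ) '' C)

/-- `P` is a partition of `S` into nonempty clusters. -/
def IsPartition (S : Set Plane) (P : Finset (Set Plane)) : Prop :=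
  (∀ C ∈ P, (C : Set Plane).Nonempty) ∧
  (⋃₀ (P : Set (Set Plane)) = S) ∧
  ((P : Set (Set Plane)).PairwiseDisjoint id)

/-- A `k`-clustering of `S`: a partition of `S` into at most `k` nonempty clusters. -/
def IsKClustering (S : Set Plane) (k : ℕ) (P : Finset (Set Plane)) : Prop :=
  IsPartition S P ∧ P.card ≤ k

/-- Cost of a clustering: sum of the perimeters of the clusters. -/
noncomputable def clusteringCost (P : Finset (Set Plane)) : ℝ :=
  ∑ C ∈ P, perim C

open Real

def dirProj (θ : ℝ) (p : Plane) : ℝ := p 0 * cos θ + p 1 * sin θ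

lemma isLinearMap_dirProj (θ : ℝ) : IsLinearMap ℝ (dirProj θ) where
  map_add p q := by simp only [dirProj, PiLp.add_apply]; ring
  map_smul c p := by simp only [dirProj, PiLp.smul_apply, smul_eq_mul]; ring

lemma continuous_dirProj (p : Plane) : Continuous fun θ => dirProj θ p := by
  unfold dirProj; fun_prop

lemma integral_dirProj (p : Plane) : ∫ θ in (0:ℝ)..(2 * π), dirProj θ p = 0 := by
  simp only [dirProj]
  rw [intervalIntegral.integral_add (Continuous.intervalIntegrable (by fun_prop) _ _)
      (Continuous.intervalIntegrable (by fun_prop) _ _),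
    intervalIntegral.integral_const_mul, intervalIntegral.integral_const_mul,
    integral_cos, integral_sin]
  simp

lemma continuous_sSup_image_dirProj {C : Set Plane} (hC : C.Finite) (hne : C.Nonempty) :
    Continuous fun θ => sSup (dirProj θ '' C) := by
  have hne' : hC.toFinset.Nonempty := hC.toFinset_nonempty.2 hne
  have h : ∀ θ, sSup (dirProj θ '' C) = hC.toFinset.sup' hne' (dirProj θ) := fun θ => by
    rw [Finset.sup'_eq_csSup_image, hC.coe_toFinset]
  simp only [h]
  exact Continuous.finset_sup'_apply hne' fun p _ => continuous_dirProj p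

lemma dirProj_le_sSup_of_mem_convexHull {C : Set Plane} {θ : ℝ} (hC : BddAbove (dirProj θ '' C))
    {x : Plane} (hx : x ∈ convexHull ℝ C) : dirProj θ x ≤ sSup (dirProj θ '' C) :=
  convexHull_min (fun _ hp => le_csSup hC ⟨_, hp, rfl⟩)
    (convex_halfSpace_le (isLinearMap_dirProj θ) _) hx

theorem perim_union_le {C₁ C₂ : Set Plane} (h₁ : C₁.Finite) (h₂ : C₂.Finite)
    (hx : (convexHull ℝ C₁ ∩ convexHull ℝ C₂).Nonempty) :
    perim (C₁ ∪ C₂) ≤ perim C₁ + perim C₂ := by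
  obtain ⟨x, hx₁, hx₂⟩ := hx
  have hn₁ : C₁.Nonempty := convexHull_nonempty_iff.1 ⟨x, hx₁⟩
  have hn₂ : C₂.Nonempty := convexHull_nonempty_iff.1 ⟨x, hx₂⟩
  have hc₁ := continuous_sSup_image_dirProj h₁ hn₁
  have hc₂ := continuous_sSup_image_dirProj h₂ hn₂
  have hc : Continuous fun θ => sSup (dirProj θ '' C₁) + sSup (dirProj θ '' C₂) := hc₁.add hc₂
  have pointwise : ∀ θ ∈ Set.Icc (0:ℝ) (2 * π), sSup (dirProj θ '' (C₁ ∪ C₂))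
      ≤ sSup (dirProj θ '' C₁) + sSup (dirProj θ '' C₂) - dirProj θ x := by
    intro θ _
    have hb₁ := (h₁.image (dirProj θ)).bddAbove
    have hb₂ := (h₂.image (dirProj θ)).bddAbove
    have l₁ := dirProj_le_sSup_of_mem_convexHull hb₁ hx₁
    have l₂ := dirProj_le_sSup_of_mem_convexHull hb₂ hx₂
    rw [Set.image_union, csSup_union hb₁ (hn₁.image _) hb₂ (hn₂.image _), sup_le_iff]
    constructor <;> linarith
  calc perim (C₁ ∪ C₂)
      ≤ ∫ θ in (0:ℝ)..(2 * π),
          (sSup (dirProj θ '' C₁) + sSup (dirProj θ '' C₂) - dirProj θ x) :=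
        intervalIntegral.integral_mono_on (by positivity)
          ((continuous_sSup_image_dirProj (h₁.union h₂) (hn₁.inl)).intervalIntegrable _ _)
          ((hc.sub (continuous_dirProj x)).intervalIntegrable _ _) pointwise
    _ = perim C₁ + perim C₂ := by
        rw [intervalIntegral.integral_sub (hc.intervalIntegrable _ _)
            ((continuous_dirProj x).intervalIntegrable _ _),
          intervalIntegral.integral_add (hc₁.intervalIntegrable _ _) (hc₂.intervalIntegrable _ _),
          integral_dirProj, sub_zero]
        rfl

lemma IsPartition.subset {S : Set Plane} {P : Finset (Set Plane)} (hP : IsPartition S P)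
    {C : Set Plane} (hC : C ∈ P) : C ⊆ S :=
  hP.2.1 ▸ Set.subset_sUnion_of_mem hC

lemma finite_setOf_isPartition {S : Set Plane} (hS : S.Finite) :
    {P : Finset (Set Plane) | IsPartition S P}.Finite :=
  (hS.finite_subsets.finite_subsets.preimage Finset.coe_injective.injOn).subset
    fun _ hP _ hC => hP.subset hC

lemma isKClustering_singleton {S : Set Plane} (hS : S.Nonempty) {k : ℕ} (hk : 1 ≤ k) :
    IsKClustering S k {S} :=
  ⟨⟨by simpa using hS, by simp, by simp⟩, by simpa using hk⟩

open Classical in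
def mergeClusters (P : Finset (Set Plane)) (C₁ C₂ : Set Plane) : Finset (Set Plane) :=
  insert (C₁ ∪ C₂) ((P.erase C₁).erase C₂)

section mergeClusters

open Classical

variable {S : Set Plane} {P : Finset (Set Plane)} {C₁ C₂ : Set Plane}

lemma insert_insert_erase_erase (h₁ : C₁ ∈ P) (h₂ : C₂ ∈ P) (hne : C₁ ≠ C₂) :
    insert C₁ (insert C₂ ((P.erase C₁).erase C₂)) = P := by
  rw [Finset.insert_erase (Finset.mem_erase.2 ⟨hne.symm, h₂⟩), Finset.insert_erase h₁]

lemma card_mergeClusters_lt (h₁ : C₁ ∈ P) (h₂ : C₂ ∈ P) (hne : C₁ ≠ C₂) :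
    (mergeClusters P C₁ C₂).card < P.card := by
  have hP := congrArg Finset.card (insert_insert_erase_erase h₁ h₂ hne)
  rw [Finset.card_insert_of_notMem (by simp [hne]),
    Finset.card_insert_of_notMem (by simp)] at hP
  have := Finset.card_insert_le (C₁ ∪ C₂) ((P.erase C₁).erase C₂)
  rw [mergeClusters]
  omega

lemma IsPartition.union_notMem_erase_erase (hP : IsPartition S P) (h₁ : C₁ ∈ P) :
    C₁ ∪ C₂ ∉ (P.erase C₁).erase C₂ := by
  intro hmem
  obtain ⟨-, hne₁, hmemP⟩ := by simpa only [Finset.mem_erase] using hmem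
  obtain ⟨x, hx⟩ := hP.1 C₁ h₁
  exact Set.disjoint_left.1 (hP.2.2 hmemP h₁ hne₁) (Or.inl hx) hx

lemma isPartition_mergeClusters (hP : IsPartition S P) (h₁ : C₁ ∈ P) (h₂ : C₂ ∈ P)
    (hne : C₁ ≠ C₂) : IsPartition S (mergeClusters P C₁ C₂) := by
  obtain ⟨hPne, hPun, hPdisj⟩ := hP
  have hsub : (P.erase C₁).erase C₂ ⊆ P :=
    (Finset.erase_subset _ _).trans (Finset.erase_subset _ _)
  refine ⟨?_, ?_, ?_⟩
  · simp only [mergeClusters, Finset.forall_mem_insert]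
    exact ⟨(hPne C₁ h₁).inl, fun C hC => hPne C (hsub hC)⟩
  · conv_rhs => rw [← hPun, ← insert_insert_erase_erase h₁ h₂ hne]
    rw [mergeClusters]
    simp only [Finset.coe_insert, Set.sUnion_insert, Set.union_assoc]
  · rw [mergeClusters, Finset.coe_insert]
    refine (hPdisj.subset (Finset.coe_subset.2 hsub)).insert fun C hC _ => ?_
    obtain ⟨hne₂, hne₁, hCP⟩ := by simpa only [Finset.mem_coe, Finset.mem_erase] using hC
    exact Set.disjoint_union_left.2
      ⟨hPdisj h₁ hCP (Ne.symm hne₁), hPdisj h₂ hCP (Ne.symm hne₂)⟩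

lemma IsPartition.clusteringCost_mergeClusters (hP : IsPartition S P) (h₁ : C₁ ∈ P)
    (h₂ : C₂ ∈ P) (hne : C₁ ≠ C₂) :
    clusteringCost (mergeClusters P C₁ C₂) + perim C₁ + perim C₂
      = clusteringCost P + perim (C₁ ∪ C₂) := by
  conv_rhs => rw [clusteringCost, ← insert_insert_erase_erase h₁ h₂ hne]
  rw [clusteringCost, mergeClusters, Finset.sum_insert (hP.union_notMem_erase_erase h₁),
    Finset.sum_insert (by simp [hne]), Finset.sum_insert (by simp)]
  ring

end mergeClusters

def IsOptimalKClustering (S : Set Plane) (k : ℕ) (P : Finset (Set Plane)) : Prop :=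
  IsKClustering S k P ∧ ∀ Q, IsKClustering S k Q → clusteringCost P ≤ clusteringCost Q

lemma exists_isOptimalKClustering {S : Set Plane} (hS : S.Finite) {k : ℕ}
    {P₀ : Finset (Set Plane)} (h₀ : IsKClustering S k P₀) :
    ∃ P, IsOptimalKClustering S k P :=
  Set.exists_min_image {P | IsKClustering S k P} clusteringCost
    ((finite_setOf_isPartition hS).subset fun _ hP => hP.1) ⟨P₀, h₀⟩

namespace IsOptimalKClustering

variable {S : Set Plane} {k : ℕ} {P : Finset (Set Plane)} {C₁ C₂ : Set Plane}

lemma mergeClusters (hP : IsOptimalKClustering S k P) (hS : S.Finite) (h₁ : C₁ ∈ P)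
    (h₂ : C₂ ∈ P) (hne : C₁ ≠ C₂) (hx : (convexHull ℝ C₁ ∩ convexHull ℝ C₂).Nonempty) :
    IsOptimalKClustering S k (mergeClusters P C₁ C₂) := by
  obtain ⟨⟨hPpart, hPcard⟩, hPmin⟩ := hP
  have hclus : IsKClustering S k (_root_.mergeClusters P C₁ C₂) :=
    ⟨isPartition_mergeClusters hPpart h₁ h₂ hne,
      (card_mergeClusters_lt h₁ h₂ hne).le.trans hPcard⟩
  have hcost := hPpart.clusteringCost_mergeClusters h₁ h₂ hne
  have hperim := perim_union_le (hS.subset (hPpart.subset h₁)) (hS.subset (hPpart.subset h₂)) hx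
  exact ⟨hclus, fun Q hQ => by linarith [hPmin Q hQ]⟩

lemma convexHull_inter_eq_empty (hP : MinimalFor (IsOptimalKClustering S k) Finset.card P)
    (hS : S.Finite) (h₁ : C₁ ∈ P) (h₂ : C₂ ∈ P) (hne : C₁ ≠ C₂) :
    convexHull ℝ C₁ ∩ convexHull ℝ C₂ = ∅ := by
  by_contra hx
  have hmerge := hP.1.mergeClusters hS h₁ h₂ hne (Set.nonempty_iff_ne_empty.2 hx)
  have hcard := card_mergeClusters_lt h₁ h₂ hne
  exact hcard.not_ge (hP.2 hmerge hcard.le)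

end IsOptimalKClustering

theorem exists_optimal_k_clustering_disjoint_hulls_general
    (S : Set Plane) (hS : S.Finite) (hSne : S.Nonempty)
    (k : ℕ) (hk1 : 1 ≤ k) :
    ∃ P : Finset (Set Plane), IsKClustering S k P ∧
      (∀ Q : Finset (Set Plane), IsKClustering S k Q →
        clusteringCost P ≤ clusteringCost Q) ∧
      (∀ C₁ ∈ P, ∀ C₂ ∈ P, C₁ ≠ C₂ →
        convexHull ℝ C₁ ∩ convexHull ℝ C₂ = ∅) := by
  obtain ⟨P₀, hP₀⟩ := exists_isOptimalKClustering hS (isKClustering_singleton hSne hk1)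
  obtain ⟨P, hP⟩ := exists_minimalFor_of_wellFoundedLT _ Finset.card ⟨P₀, hP₀⟩
  exact ⟨P, hP.1.1, hP.1.2, fun _ h₁ _ h₂ hne =>
    IsOptimalKClustering.convexHull_inter_eq_empty hP hS h₁ h₂ hne⟩

/-- there is an optimal `k`-clustering whose clusters have pairwise
disjoint convex hulls. -/
theorem exists_optimal_k_clustering_disjoint_hulls
    (S : Set Plane) (hS : S.Finite) (hSne : S.Nonempty)
    (k : ℕ) (hk1 : 1 ≤ k) (hkn : k ≤ S.ncard) :
    ∃ P : Finset (Set Plane), IsKClustering S k P ∧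
      (∀ Q : Finset (Set Plane), IsKClustering S k Q →
        clusteringCost P ≤ clusteringCost Q) ∧
      (∀ C₁ ∈ P, ∀ C₂ ∈ P, C₁ ≠ C₂ →
        convexHull ℝ C₁ ∩ convexHull ℝ C₂ = ∅) :=
  exists_optimal_k_clustering_disjoint_hulls_general S hS hSne k hk1

end
end

section
/- Let η > 0, let x₀ ∈ ℝ², and let A be a finite set of n ≥ 2 points in ℝ² such that every p ∈ A satisfies ‖p − x₀‖ ≥ η/2. Then there exists a unit vector u ∈ ℝ² such that every point p ∈ A is at distance at least η/n² from the ray {x₀ + t·u : t ≥ 0}, i.e. inf_{t ≥ 0} ‖p − (x₀ + t·u)‖ ≥ η/n² for all p ∈ A. -/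
/-!
Identify the plane with `ℂ` and `x₀` with `0`. The line through `0` in direction `e^{iθ}` lies at
distance `‖z‖ |sin (arg z - θ)|` from `z`, so for a point with `‖z‖ ≥ η/2` the directions
(taken modulo `π`) whose line comes closer than `c = η/n²` form an arc of length at most
`(2π/3) · c/‖z‖ ≤ 4π/(3n²)`, by the chord bound `|sin x| ≥ (3/π)|x|` on `[-π/6, π/6]`. The `n`
bad arcs have total length at most `4π/(3n) < π`, so some direction avoids all of them; even the
whole line in that direction, not only the ray, stays at distance `≥ c` from every point.
-/

noncomputable section

open Real MeasureTheory Finset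

theorem Real.sin_div_mul_le_sin {a x : ℝ} (hx : 0 ≤ x) (hxa : x ≤ a) (ha : a ≤ π) :
    sin a / a * x ≤ sin x := by
  rcases hxa.eq_or_lt with rfl | hxa
  · rcases hx.eq_or_lt with rfl | hx
    · simp
    · rw [div_mul_cancel₀ _ hx.ne']
  have ha0 : 0 < a := hx.trans_lt hxa
  have hchord := strictConcaveOn_sin_Icc.concaveOn.2
    (⟨le_rfl, pi_pos.le⟩ : (0 : ℝ) ∈ Set.Icc 0 π) (⟨ha0.le, ha⟩ : a ∈ Set.Icc 0 π)
    (sub_nonneg.2 ((div_le_one ha0).2 hxa.le)) (div_nonneg hx ha0.le) (sub_add_cancel 1 (x / a))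
  simp only [smul_eq_mul, mul_zero, zero_add, sin_zero, div_mul_cancel₀ _ ha0.ne'] at hchord
  linarith [div_mul_comm (sin a) a x]

-- The chord of `sin` over `[0, π/6]`; Jordan's `2/π * |x| ≤ |sin x|` is too weak for `n = 2`.
theorem Real.min_le_abs_sin {x : ℝ} (hx : |x| ≤ π / 2) :
    min (1 / 2) (3 / π * |x|) ≤ |sin x| := by
  wlog hx₀ : 0 ≤ x generalizing x
  · simpa using this (x := -x) (by rwa [abs_neg]) (by linarith)
  rw [abs_of_nonneg hx₀] at hx ⊢
  have hsin : 0 ≤ sin x := sin_nonneg_of_nonneg_of_le_pi hx₀ (by linarith [pi_pos])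
  rw [abs_of_nonneg hsin]
  rcases le_total x (π / 6) with hx6 | hx6
  · refine min_le_of_right_le ?_
    have := sin_div_mul_le_sin hx₀ hx6 (by linarith [pi_pos])
    rw [sin_pi_div_six] at this
    linarith [show 1 / 2 / (π / 6) * x = 3 / π * x by field_simp; ring]
  · refine min_le_of_left_le ?_
    rw [← sin_pi_div_six]
    exact sin_le_sin_of_le_of_le_pi_div_two (by linarith [pi_pos]) hx hx6

theorem Real.min_norm_addCircle_le_abs_sin (x : ℝ) :
    min (1 / 2) (3 / π * ‖(x : AddCircle π)‖) ≤ |sin x| := by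
  set k := round (π⁻¹ * x)
  have hnorm : ‖(x : AddCircle π)‖ = |x - k * π| := AddCircle.norm_eq π
  have hhalf : |x - k * π| ≤ π / 2 := by
    simpa [hnorm, abs_of_pos pi_pos] using
      AddCircle.norm_le_half_period π (x := (x : AddCircle π)) pi_ne_zero
  rw [hnorm]
  calc _ ≤ |sin (x - k * π)| := min_le_abs_sin hhalf
    _ = |sin x| := by rw [sin_sub_int_mul_pi, abs_mul, abs_neg_one_zpow, one_mul]

theorem AddCircle.exists_forall_le_norm_sub {T : ℝ} [Fact (0 < T)] {ι : Type*} (s : Finset ι)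
    (x : ι → AddCircle T) (ε : ι → ℝ) (hε : ∀ i ∈ s, 0 ≤ ε i) (hsum : ∑ i ∈ s, 2 * ε i < T) :
    ∃ y : AddCircle T, ∀ i ∈ s, ε i ≤ ‖y - x i‖ := by
  by_contra! hcover
  have hsub : Set.univ ⊆ ⋃ i ∈ s, Metric.closedBall (x i) (ε i) := fun y _ ↦ by
    obtain ⟨i, hi, hlt⟩ := hcover y
    exact Set.mem_biUnion hi (by rw [Metric.mem_closedBall, dist_eq_norm]; exact hlt.le)
  have := calc ENNReal.ofReal T = volume (Set.univ : Set (AddCircle T)) := by simp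
    _ ≤ ∑ i ∈ s, volume (Metric.closedBall (x i) (ε i)) :=
      (measure_mono hsub).trans (measure_biUnion_finset_le s _)
    _ ≤ ∑ i ∈ s, ENNReal.ofReal (2 * ε i) := by
      gcongr with i
      rw [AddCircle.volume_closedBall]
      exact ENNReal.ofReal_le_ofReal (min_le_right _ _)
    _ = ENNReal.ofReal (∑ i ∈ s, 2 * ε i) :=
      (ENNReal.ofReal_sum_of_nonneg fun i hi ↦ mul_nonneg zero_le_two (hε i hi)).symm
  exact (ENNReal.ofReal_lt_ofReal_iff (Fact.out : 0 < T)).2 hsum |>.not_ge this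

theorem Complex.norm_mul_abs_sin_arg_sub_le (z : ℂ) (θ t : ℝ) :
    ‖z‖ * |Real.sin (arg z - θ)| ≤ ‖z - t * exp (θ * I)‖ := by
  have hrot : (z - t * exp (θ * I)) * exp (-θ * I) = ‖z‖ * exp ((arg z - θ : ℝ) * I) - t := by
    conv_lhs => rw [← norm_mul_exp_arg_mul_I z]
    rw [sub_mul, mul_assoc, mul_assoc, ← exp_add, ← exp_add]
    push_cast
    ring_nf
    simp
  calc ‖z‖ * |Real.sin (arg z - θ)| = |(‖z‖ * exp ((arg z - θ : ℝ) * I) - t).im| := by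
        rw [sub_im, ofReal_im, sub_zero, im_ofReal_mul, exp_ofReal_mul_I_im, abs_mul,
          abs_norm]
    _ ≤ ‖z - t * exp (θ * I)‖ := by
        rw [← hrot, ← ofReal_neg]
        exact (abs_im_le_norm _).trans (by rw [norm_mul, norm_exp_ofReal_mul_I, mul_one])

theorem Complex.exists_forall_le_norm_sub_mul_exp (S : Finset ℂ) {r c : ℝ} (hS : ∀ z ∈ S, r ≤ ‖z‖)
    (hc : 0 < c) (hcr : 2 * c ≤ r) (hcard : 2 * #S * c < 3 * r) :
    ∃ θ : ℝ, ∀ z ∈ S, ∀ t : ℝ, c ≤ ‖z - t * exp (θ * I)‖ := by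
  have : Fact (0 < π) := ⟨pi_pos⟩
  have hpos : ∀ z ∈ S, 0 < ‖z‖ := fun z hz ↦ by linarith [hS z hz]
  -- The line in direction `θ` comes closer than `c` to `z` only for `θ` within `π/3 · c/‖z‖`
  -- of `arg z` modulo `π`.
  obtain ⟨y, hy⟩ := AddCircle.exists_forall_le_norm_sub S (fun z ↦ (arg z : AddCircle π))
    (fun z ↦ π / 3 * (c / ‖z‖)) (fun z hz ↦ by have := hpos z hz; positivity) <| calc
      ∑ z ∈ S, 2 * (π / 3 * (c / ‖z‖)) ≤ ∑ _z ∈ S, 2 * (π / 3 * (c / r)) := by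
        gcongr with z hz
        · linarith
        · exact hS z hz
      _ = π * (2 * #S * c / (3 * r)) := by
        rw [sum_const, nsmul_eq_mul]
        field_simp
      _ < π * 1 := by
        gcongr
        exact (div_lt_one (by linarith)).2 hcard
      _ = π := mul_one π
  obtain ⟨θ, rfl⟩ := QuotientAddGroup.mk_surjective y
  refine ⟨θ, fun z hz t ↦ le_trans ?_ (norm_mul_abs_sin_arg_sub_le z θ t)⟩
  have hz₀ := hpos z hz
  rw [← div_le_iff₀' hz₀]
  have hsin := min_norm_addCircle_le_abs_sin (arg z - θ)
  rw [AddCircle.coe_sub, ← norm_neg, neg_sub] at hsin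
  refine le_trans (le_min ?_ ?_) hsin
  · rw [div_le_iff₀ hz₀]; linarith [hS z hz]
  · calc c / ‖z‖ = 3 / π * (π / 3 * (c / ‖z‖)) := by field_simp
      _ ≤ _ := by gcongr; exact hy z hz

/-- existence of a good ray. If every point of a finite set `A` of
`n ≥ 2` points is at distance at least `η/2` from `x₀`, then there is a ray from
`x₀` staying at distance at least `η/n²` from every point of `A`. -/
theorem exists_good_ray
    (η : ℝ) (hη : 0 < η) (x₀ : Plane)
    (A : Set Plane) (hA : A.Finite) (hn : 2 ≤ A.ncard)
    (hfar : ∀ p ∈ A, dist p x₀ ≥ η / 2) :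
    ∃ u : Plane, ‖u‖ = 1 ∧
      ∀ p ∈ A, ∀ t : ℝ, 0 ≤ t →
        dist p (x₀ + t • u) ≥ η / (A.ncard : ℝ) ^ 2 := by
  set n := A.ncard
  have hn' : (2 : ℝ) ≤ n := by exact_mod_cast hn
  have hn2 : (4 : ℝ) ≤ n ^ 2 := by nlinarith
  let e : Plane ≃ₗᵢ[ℝ] ℂ := Complex.orthonormalBasisOneI.repr.symm
  set S := hA.toFinset.image fun p ↦ e (p - x₀)
  have hS : (#S : ℝ) ≤ n := by
    exact_mod_cast card_image_le.trans_eq (Set.ncard_eq_toFinset_card A hA).symm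
  have hSfar : ∀ z ∈ S, η / 2 ≤ ‖z‖ := by
    simp only [S, mem_image, Set.Finite.mem_toFinset]
    rintro _ ⟨p, hp, rfl⟩
    rw [e.norm_map, ← dist_eq_norm]
    exact hfar p hp
  have hc : 2 * (η / n ^ 2) ≤ η / 2 := by
    rw [mul_div_assoc', div_le_div_iff₀ (by positivity) two_pos]
    nlinarith
  have hcard : 2 * #S * (η / n ^ 2) < 3 * (η / 2) := by
    rw [mul_div_assoc', div_lt_iff₀ (by positivity)]
    nlinarith [mul_le_mul_of_nonneg_left hS hη.le, mul_pos hη (by linarith : (0 : ℝ) < n)]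
  obtain ⟨θ, hθ⟩ :=
    Complex.exists_forall_le_norm_sub_mul_exp S hSfar (by positivity) hc hcard
  refine ⟨e.symm (Complex.exp (θ * Complex.I)), by simp [Complex.norm_exp_ofReal_mul_I], ?_⟩
  intro p hp t _
  have := hθ (e (p - x₀)) (mem_image_of_mem _ (hA.mem_toFinset.2 hp)) t
  rwa [dist_eq_norm, ← e.norm_map, map_sub, map_add, map_smul, e.apply_symm_apply,
    Complex.real_smul, ← sub_sub, ← map_sub]

end
end
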